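/- Fix an integer D ≥ 2 and suppose x ∈ (0,1) satisfies (D-1)x^{D+2} - D x^{D+1} + 2x - 1 = 0. Define p_k = ((1-x)/(1-x^{D+1})) x^k for k = 0,...,D. Then p is a probability vector (∑_k p_k = 1) and ∑_{k=1}^{D} k p_k = 1, i.e., p ∈ M_D. -/
import Mathlib

lemma aux_mean_sum (x : ℝ) : ∀ n : ℕ,
    (1 - x) ^ 2 * ∑ k ∈ Finset.range n, (k : ℝ) * x ^ k
      = x - (n : ℝ) * x ^ n + ((n : ℝ) - 1) * x ^ (n + 1) := by
  intro n
  induction n with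
  | zero => simp
  | succ n ih =>
    rw [Finset.sum_range_succ, mul_add, ih]
    push_cast
    ring

theorem stmt_14 (D : ℕ) (hD : 2 ≤ D) (x : ℝ) (hx0 : 0 < x) (hx1 : x < 1)
    (hpoly : (D - 1 : ℝ) * x ^ (D + 2) - (D : ℝ) * x ^ (D + 1) + 2 * x - 1 = 0)
    (p : ℕ → ℝ) (hp : ∀ k, p k = (1 - x) / (1 - x ^ (D + 1)) * x ^ k) :
    (∀ k ≤ D, 0 ≤ p k) ∧
    (∑ k ∈ Finset.range (D + 1), p k) = 1 ∧
    (∑ k ∈ Finset.range (D + 1), (k : ℝ) * p k) = 1 := by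
  have hxD : x ^ (D + 1) < 1 := pow_lt_one₀ hx0.le hx1 (by omega)
  have hden : 0 < 1 - x ^ (D + 1) := by linarith
  have hx1' : (0:ℝ) < 1 - x := by linarith
  have hc : 0 < (1 - x) / (1 - x ^ (D + 1)) := div_pos hx1' hden
  have hgeom : ∑ k ∈ Finset.range (D + 1), x ^ k = (1 - x ^ (D + 1)) / (1 - x) := by
    rw [geom_sum_eq (by linarith : x ≠ 1)]
    rw [div_eq_div_iff (by linarith) (by linarith)]
    ring
  refine ⟨fun k _ => ?_, ?_, ?_⟩
  · rw [hp]
    positivity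
  · rw [Finset.sum_congr rfl fun k _ => hp k, ← Finset.mul_sum, hgeom,
      div_mul_div_comm]
    rw [div_eq_one_iff_eq (by positivity)]
    ring
  · have hmean := aux_mean_sum x (D + 1)
    have hS : ∑ k ∈ Finset.range (D + 1), (k : ℝ) * x ^ k
        = (1 - x ^ (D + 1)) / (1 - x) := by
      have h2 : (1 - x) ^ 2 * ∑ k ∈ Finset.range (D + 1), (k : ℝ) * x ^ k
          = (1 - x) * (1 - x ^ (D + 1)) := by
        rw [hmean]
        push_cast
        nlinarith [hpoly, pow_succ x (D + 1)]
      have hne : (1 - x) ≠ 0 := by linarith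
      have h3 : (1 - x) * ((1 - x) * ∑ k ∈ Finset.range (D + 1), (k : ℝ) * x ^ k)
          = (1 - x) * (1 - x ^ (D + 1)) := by linear_combination h2
      have h4 := mul_left_cancel₀ hne h3
      rw [eq_div_iff hne]
      linear_combination h4
    have : ∀ k ∈ Finset.range (D + 1), (k : ℝ) * p k
        = (1 - x) / (1 - x ^ (D + 1)) * ((k : ℝ) * x ^ k) := by
      intro k _; rw [hp]; ring
    rw [Finset.sum_congr rfl this, ← Finset.mul_sum, hS, div_mul_div_comm]
    rw [div_eq_one_iff_eq (by positivity)]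
    ring
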